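/- arXiv:1808.06912 — 3 statements merged into one kernel-verified Lean document; each statement's English description precedes it below -/
import Mathlib

section
/- Let f: ℝ → ℝ be four times continuously differentiable on a neighborhood U of 0 with f(0) = f'(0) = f'''(0) = 0, |f''(0)| ≤ Cε² and |f''''(0) + c₄| ≤ Cε² for some constants C, c₄ > 0, and suppose |f(k) − ½f''(0)k² − (1/24)f''''(0)k⁴| ≤ c₄k⁴/48 for all k ∈ U. Then there is a constant C' > 0 depending only on C and c₄ such that f(k) ≤ C'ε³|k| for all k ∈ U, provided ε > 0 is sufficiently small. -/
lemma tangent_bound (a σ t : ℝ) (ha : 0 ≤ a) (hσ : 0 ≤ σ) (ht : 0 ≤ t) :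
    3*a*σ^2*t^2 - a*t^4 ≤ 2*a*σ^3*t := by
  nlinarith [mul_nonneg (mul_nonneg (mul_nonneg ha ht) (sq_nonneg (t - σ)))
    (by linarith : (0:ℝ) ≤ t + 2*σ)]

theorem stmt_6 (C c₄ : ℝ) (hC : 0 < C) (hc₄ : 0 < c₄) :
    ∃ C' > 0, ∃ ε₀ > 0, ∀ ε : ℝ, 0 < ε → ε < ε₀ →
      ∀ (f : ℝ → ℝ) (U : Set ℝ), U ∈ nhds (0 : ℝ) → ContDiffOn ℝ 4 f U →
        f 0 = 0 → deriv f 0 = 0 → iteratedDeriv 3 f 0 = 0 →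
        |iteratedDeriv 2 f 0| ≤ C * ε ^ 2 →
        |iteratedDeriv 4 f 0 + c₄| ≤ C * ε ^ 2 →
        (∀ k ∈ U, |f k - (1/2) * iteratedDeriv 2 f 0 * k ^ 2
            - (1/24) * iteratedDeriv 4 f 0 * k ^ 4| ≤ c₄ * k ^ 4 / 48) →
        ∀ k ∈ U, f k ≤ C' * ε ^ 3 * |k| := by
  set s := Real.sqrt (C/c₄) with hsdef
  have hs0 : 0 < s := Real.sqrt_pos.mpr (by positivity)
  have hs2 : s^2 = C/c₄ := Real.sq_sqrt (by positivity)
  have hs2' : s^2 * c₄ = C := by rw [hs2]; field_simp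
  have hs3 : s^3 * c₄ = C * s := by
    have : s^3 * c₄ = (s^2 * c₄) * s := by ring
    rw [this, hs2']
  refine ⟨(4*C/3)*s, by positivity, Real.sqrt (c₄/(4*C)),
    Real.sqrt_pos.mpr (by positivity), ?_⟩
  intro ε hε hε₀ f U hU hf h0 h1 h3 h2 h4 hbound k hk
  have hε2 : ε^2 < c₄/(4*C) := (Real.lt_sqrt hε.le).mp hε₀
  have hCe : ε^2 * (4*C) < c₄ := (lt_div_iff₀ (by positivity)).mp hε2
  have ha2 : iteratedDeriv 2 f 0 ≤ C*ε^2 := (abs_le.mp h2).2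
  have ha4 : iteratedDeriv 4 f 0 ≤ C*ε^2 - c₄ := by
    have := (abs_le.mp h4).2; linarith
  have hb := (abs_le.mp (hbound k hk)).2
  have ht0 : 0 ≤ |k| := abs_nonneg k
  have ht2 : |k|^2 = k^2 := sq_abs k
  have ht4 : |k|^4 = k^4 := by
    rw [show (4:ℕ) = 2*2 from rfl, pow_mul, pow_mul, ht2]
  have hk2 : (0:ℝ) ≤ k^2 := sq_nonneg k
  have hk4 : (0:ℝ) ≤ k^4 := by positivity
  have key1 : f k ≤ (C*ε^2/2)*k^2 - (c₄/96)*k^4 := by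
    nlinarith [mul_nonneg (sub_nonneg.mpr ha2) hk2,
      mul_nonneg (sub_nonneg.mpr ha4) hk4,
      mul_nonneg (le_of_lt (by linarith : (0:ℝ) < c₄ - ε^2*(4*C))) hk4]
  have key2 := tangent_bound (c₄/96) (4*ε*s) |k| (by positivity) (by positivity) ht0
  have e1 : 3*(c₄/96)*(4*ε*s)^2*|k|^2 = (C*ε^2/2)*|k|^2 := by
    rw [ht2]; linear_combination (k^2*ε^2/2) * hs2'
  have e2 : 2*(c₄/96)*(4*ε*s)^3*|k| = (4*C/3)*s*ε^3*|k| := by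
    linear_combination (4*ε^3*|k|/3) * hs3
  rw [e1, e2, ht4] at key2
  calc f k ≤ (C*ε^2/2)*k^2 - (c₄/96)*k^4 := key1
    _ ≤ (4*C/3)*s*ε^3*|k| := by rw [ht2] at key2; linarith
    _ = (4*C/3)*s * ε^3 * |k| := by ring
end

section
/- (Multiplier estimate with scaling) Let θ₀ ≥ 0, θ_∞ ∈ ℝ, and g: ℝ → ℂ satisfy |g(k)| ≤ C·min(|k|^{θ₀}, (1+|k|)^{θ_∞}). Let g_op be the Fourier multiplier operator with symbol g. Suppose μ₁ = μ₂ ≥ 0 and m₂ − m₁ ≥ max(θ₀, θ_∞). Then there is C' > 0 such that for all ε ∈ (0,1) and all A ∈ H^∞_{μ₂, m₂}, ‖g_op (A(ε·))‖_{H^∞_{μ₁/ε, m₁}} ≤ C' ε^{θ₀ − 1/2} ‖A‖_{H^∞_{μ₂, m₂}}. -/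
open MeasureTheory

/-- Fourier transform of a complex-valued function on `ℝ`. -/
noncomputable def FT (u : ℝ → ℂ) : ℝ → ℂ := FourierTransform.fourier u

/-- Membership in the weighted space `H^∞_{μ,s}`. -/
def memH (μ s : ℝ) (u : ℝ → ℂ) : Prop :=
  MemLp u 2 volume ∧
  MemLp (fun k : ℝ => ((Real.exp (μ * |k|) * (1 + k ^ 2) ^ (s / 2) : ℝ) : ℂ) * FT u k) 2 volume

/-- The norm of the weighted space `H^∞_{μ,s}`. -/
noncomputable def Hnorm (μ s : ℝ) (u : ℝ → ℂ) : ℝ :=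
  (∫ k : ℝ, ‖FT u k‖ ^ 2 * Real.exp (2 * μ * |k|) * (1 + k ^ 2) ^ s) ^ ((1 : ℝ) / 2)

/-- The Fourier multiplier operator with symbol `g`. -/
noncomputable def multOp (g : ℝ → ℂ) (u : ℝ → ℂ) : ℝ → ℂ :=
  FourierTransformInv.fourierInv (fun k => g k * FT u k)

/-!
On the Fourier side `multOp g` multiplies by `g`, and `x ↦ A (ε x)` has transform
`ε⁻¹ Â(k / ε)`. Substituting `k = ε κ`, the weight `exp (2 (μ / ε) |k|)` becomes exactly
`exp (2 μ |κ|)`, while `‖g (ε κ)‖² ≤ C² ε^{2θ₀} |κ|^{2θ₀}` and `(1 + ε²κ²)^{m₁} ≤ (1 + κ²)^{m₁}`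
are absorbed into `(1 + κ²)^{m₂}`; the Jacobian and the scaling of `Â` contribute `ε · ε⁻²`.
The analytic input is Fourier inversion `𝓕 (𝓕⁻ G) = G` almost everywhere for integrable `G`
with integrable `𝓕⁻ G`, obtained by testing against smooth compactly supported functions;
in every other case the Fourier integral is `0` by convention, and so is the left-hand side.
-/

open Real Complex FourierTransform SchwartzMap

section FourierInversion

variable {V : Type*} [NormedAddCommGroup V] [InnerProductSpace ℝ V] [MeasurableSpace V]
  [BorelSpace V] [FiniteDimensional ℝ V]

theorem fourier_eq_zero_of_not_integrable {f : V → ℂ} (hf : ¬Integrable f) : 𝓕 f = 0 := by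
  ext w
  rw [Real.fourier_eq]
  exact integral_undef fun h => hf ((Real.fourierIntegral_convergent_iff w).1 h)

theorem integral_fourier_mul_eq {f h : V → ℂ} (hf : Integrable f) (hh : Integrable h) :
    ∫ ξ, 𝓕 f ξ * h ξ = ∫ x, f x * 𝓕 h x := by
  have := VectorFourier.integral_fourierIntegral_smul_eq_flip (L := innerₗ V)
    continuous_fourierChar continuous_inner hf hh
  simp only [flip_innerₗ, smul_eq_mul] at this
  exact this

theorem integral_fourierInv_mul_eq {f h : V → ℂ} (hf : Integrable f) (hh : Integrable h) :
    ∫ ξ, 𝓕⁻ f ξ * h ξ = ∫ x, f x * 𝓕⁻ h x := by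
  rw [Real.fourierInv_eq_fourier_comp_neg, integral_fourier_mul_eq hf.comp_neg hh,
    ← integral_neg_eq_self]
  simp [Real.fourierInv_eq_fourier_neg]

theorem fourier_fourierInv_ae_eq {G : V → ℂ} (hG : Integrable G) (hG' : Integrable (𝓕⁻ G)) :
    𝓕 (𝓕⁻ G) =ᵐ[volume] G := by
  refine ae_eq_of_integral_contDiff_smul_eq (VectorFourier.fourierIntegral_continuous
    continuous_fourierChar continuous_inner hG').locallyIntegrable hG.locallyIntegrable
    fun φ hφ hφs => ?_
  let ψ : 𝓢(V, ℂ) := (hφs.comp_left (g := ofRealCLM) (map_zero _)).toSchwartzMap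
    (ofRealCLM.contDiff.comp hφ)
  have hψ : 𝓕⁻ (𝓕 ⇑ψ) = ψ :=
    ψ.continuous.fourierInv_fourier_eq ψ.integrable (𝓕 ψ).integrable
  calc ∫ x, φ x • 𝓕 (𝓕⁻ G) x = ∫ x, 𝓕 (𝓕⁻ G) x * ψ x := by
        simp [ψ, real_smul, mul_comm]
    _ = ∫ x, 𝓕⁻ G x * 𝓕 ψ x := integral_fourier_mul_eq hG' ψ.integrable
    _ = ∫ x, G x * 𝓕⁻ (𝓕 ⇑ψ) x := integral_fourierInv_mul_eq hG (𝓕 ψ).integrable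
    _ = ∫ x, φ x • G x := by
        simp [hψ, ψ, real_smul, mul_comm]

theorem fourier_fourierInv_ae_eq_or_eq_zero (G : V → ℂ) :
    𝓕 (𝓕⁻ G) =ᵐ[volume] G ∨ 𝓕 (𝓕⁻ G) = 0 := by
  by_cases hG' : Integrable (𝓕⁻ G)
  · by_cases hG : Integrable G
    · exact .inl (fourier_fourierInv_ae_eq hG hG')
    · right
      have : ¬Integrable fun x => G (-x) := fun h => hG (by simpa using h.comp_neg)
      rw [Real.fourierInv_eq_fourier_comp_neg, fourier_eq_zero_of_not_integrable this]
      ext w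
      simp [Real.fourier_eq]
  · exact .inr (fourier_eq_zero_of_not_integrable hG')

end FourierInversion

theorem fourier_comp_mul_left (A : ℝ → ℂ) {ε : ℝ} (hε : ε ≠ 0) (k : ℝ) :
    𝓕 (fun x => A (ε * x)) k = |ε|⁻¹ • 𝓕 A (k / ε) := by
  rw [Real.fourier_real_eq, Real.fourier_real_eq,
    ← abs_inv, ← Measure.integral_comp_mul_left (fun y => 𝐞 (-(y * (k / ε))) • A y) ε]
  congr 1 with x
  rw [show ε * x * (k / ε) = x * k by field_simp]

theorem norm_fourier_comp_mul_left (A : ℝ → ℂ) {ε : ℝ} (hε : 0 < ε) (κ : ℝ) :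
    ‖FT (fun x => A (ε * x)) (ε * κ)‖ = ε⁻¹ * ‖FT A κ‖ := by
  rw [FT, fourier_comp_mul_left A hε.ne', mul_div_cancel_left₀ κ hε.ne', norm_smul,
    Real.norm_eq_abs, abs_inv, abs_abs, abs_of_pos hε]
  rfl

theorem abs_rpow_le_one_add_sq_rpow {θ : ℝ} (hθ : 0 ≤ θ) (x : ℝ) :
    |x| ^ θ ≤ (1 + x ^ 2) ^ (θ / 2) := by
  calc |x| ^ θ = (x ^ 2) ^ (θ / 2) := by
        rw [← sq_abs, ← rpow_natCast, ← rpow_mul (abs_nonneg x)]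
        congr 1
        ring
    _ ≤ (1 + x ^ 2) ^ (θ / 2) := by gcongr; linarith

noncomputable def weightedNormSq (μ s : ℝ) (G : ℝ → ℂ) : ℝ :=
  ∫ k : ℝ, ‖G k‖ ^ 2 * Real.exp (2 * μ * |k|) * (1 + k ^ 2) ^ s

theorem Hnorm_eq (μ s : ℝ) (u : ℝ → ℂ) :
    Hnorm μ s u = weightedNormSq μ s (FT u) ^ ((1 : ℝ) / 2) :=
  rfl

theorem weightedNormSq_nonneg (μ s : ℝ) (G : ℝ → ℂ) : 0 ≤ weightedNormSq μ s G :=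
  integral_nonneg fun k => by positivity

theorem weightedNormSq_congr_ae {μ s : ℝ} {G G' : ℝ → ℂ} (h : G =ᵐ[volume] G') :
    weightedNormSq μ s G = weightedNormSq μ s G' :=
  integral_congr_ae (h.mono fun k hk => by simp only [hk])

theorem Hnorm_multOp_le (μ s : ℝ) (g u : ℝ → ℂ) :
    Hnorm μ s (multOp g u) ≤ weightedNormSq μ s (fun k => g k * FT u k) ^ ((1 : ℝ) / 2) := by
  rw [Hnorm_eq]
  change weightedNormSq μ s (𝓕 (𝓕⁻ fun k => g k * FT u k)) ^ _ ≤ _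
  rcases fourier_fourierInv_ae_eq_or_eq_zero (fun k => g k * FT u k) with h | h
  · rw [weightedNormSq_congr_ae h]
  · rw [h, show weightedNormSq μ s 0 = 0 by simp [weightedNormSq], zero_rpow one_half_pos.ne']
    exact rpow_nonneg (weightedNormSq_nonneg μ s _) _

theorem memH.integrable_weighted {μ s : ℝ} {u : ℝ → ℂ} (hu : memH μ s u) :
    Integrable fun k => ‖FT u k‖ ^ 2 * Real.exp (2 * μ * |k|) * (1 + k ^ 2) ^ s := by
  refine ((memLp_two_iff_integrable_sq_norm hu.2.1).1 hu.2).congr (ae_of_all _ fun k => ?_)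
  have h1 : (0 : ℝ) < 1 + k ^ 2 := by positivity
  simp only [norm_mul, norm_real, Real.norm_eq_abs, mul_pow, abs_exp,
    abs_of_pos (rpow_pos_of_pos h1 _)]
  rw [← Real.exp_nat_mul, ← rpow_natCast, ← rpow_mul h1.le]
  ring_nf

theorem norm_sq_mul_weight_comp_mul_le {g : ℝ → ℂ} {C θ m₁ m₂ ε : ℝ} (hC : 0 ≤ C) (hθ : 0 ≤ θ)
    (hm₁ : 0 ≤ m₁) (hm : θ ≤ m₂ - m₁) (hg : ∀ k, ‖g k‖ ≤ C * |k| ^ θ) (hε : 0 < ε)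
    (hε1 : ε ≤ 1) (κ : ℝ) :
    ‖g (ε * κ)‖ ^ 2 * (1 + (ε * κ) ^ 2) ^ m₁ ≤ C ^ 2 * ε ^ (2 * θ) * (1 + κ ^ 2) ^ m₂ := by
  have hg' : ‖g (ε * κ)‖ ≤ C * ε ^ θ * (1 + κ ^ 2) ^ (θ / 2) := by
    calc ‖g (ε * κ)‖ ≤ C * |ε * κ| ^ θ := hg _
      _ = C * (ε ^ θ * |κ| ^ θ) := by rw [abs_mul, abs_of_pos hε, mul_rpow hε.le (abs_nonneg κ)]
      _ ≤ C * (ε ^ θ * (1 + κ ^ 2) ^ (θ / 2)) := by gcongr; exact abs_rpow_le_one_add_sq_rpow hθ κ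
      _ = C * ε ^ θ * (1 + κ ^ 2) ^ (θ / 2) := by ring
  have hw : (1 + (ε * κ) ^ 2) ^ m₁ ≤ (1 + κ ^ 2) ^ m₁ := by
    refine rpow_le_rpow (by positivity) ?_ hm₁
    nlinarith [sq_nonneg κ, mul_le_one₀ hε1 hε.le hε1]
  calc ‖g (ε * κ)‖ ^ 2 * (1 + (ε * κ) ^ 2) ^ m₁
      ≤ (C * ε ^ θ * (1 + κ ^ 2) ^ (θ / 2)) ^ 2 * (1 + κ ^ 2) ^ m₁ := by gcongr
    _ = C ^ 2 * ε ^ (2 * θ) * (1 + κ ^ 2) ^ (θ + m₁) := by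
      rw [mul_pow, mul_pow, ← rpow_mul_natCast hε.le, ← rpow_mul_natCast (by positivity),
        mul_assoc, ← rpow_add (by positivity)]
      ring_nf
    _ ≤ C ^ 2 * ε ^ (2 * θ) * (1 + κ ^ 2) ^ m₂ := by
      gcongr <;> linarith [sq_nonneg κ]

theorem weightedNormSq_multiplier_comp_mul_le {g A : ℝ → ℂ} {C θ μ m₁ m₂ ε : ℝ} (hC : 0 ≤ C)
    (hθ : 0 ≤ θ) (hm₁ : 0 ≤ m₁) (hm : θ ≤ m₂ - m₁) (hg : ∀ k, ‖g k‖ ≤ C * |k| ^ θ)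
    (hA : memH μ m₂ A) (hε : 0 < ε) (hε1 : ε ≤ 1) :
    weightedNormSq (μ / ε) m₁ (fun k => g k * FT (fun x => A (ε * x)) k) ≤
      C ^ 2 * ε ^ (2 * θ - 1) * weightedNormSq μ m₂ (FT A) := by
  have hpt : ∀ κ, ‖g (ε * κ) * FT (fun x => A (ε * x)) (ε * κ)‖ ^ 2 *
      Real.exp (2 * (μ / ε) * |ε * κ|) * (1 + (ε * κ) ^ 2) ^ m₁ ≤
      ε⁻¹ ^ 2 * (C ^ 2 * ε ^ (2 * θ)) *
        (‖FT A κ‖ ^ 2 * Real.exp (2 * μ * |κ|) * (1 + κ ^ 2) ^ m₂) := by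
    intro κ
    have hexp : 2 * (μ / ε) * |ε * κ| = 2 * μ * |κ| := by
      rw [abs_mul, abs_of_pos hε]
      field_simp
    have hsym := norm_sq_mul_weight_comp_mul_le hC hθ hm₁ hm hg hε hε1 κ
    rw [norm_mul, norm_fourier_comp_mul_left A hε, hexp]
    calc (‖g (ε * κ)‖ * (ε⁻¹ * ‖FT A κ‖)) ^ 2 * Real.exp (2 * μ * |κ|) * (1 + (ε * κ) ^ 2) ^ m₁
        = ε⁻¹ ^ 2 * (‖g (ε * κ)‖ ^ 2 * (1 + (ε * κ) ^ 2) ^ m₁) *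
          (‖FT A κ‖ ^ 2 * Real.exp (2 * μ * |κ|)) := by ring
      _ ≤ ε⁻¹ ^ 2 * (C ^ 2 * ε ^ (2 * θ) * (1 + κ ^ 2) ^ m₂) *
          (‖FT A κ‖ ^ 2 * Real.exp (2 * μ * |κ|)) := by gcongr
      _ = _ := by ring
  calc weightedNormSq (μ / ε) m₁ (fun k => g k * FT (fun x => A (ε * x)) k)
      = ε * ∫ κ, ‖g (ε * κ) * FT (fun x => A (ε * x)) (ε * κ)‖ ^ 2 *
          Real.exp (2 * (μ / ε) * |ε * κ|) * (1 + (ε * κ) ^ 2) ^ m₁ := by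
        rw [Measure.integral_comp_mul_left (fun k => ‖g k * FT (fun x => A (ε * x)) k‖ ^ 2 *
          Real.exp (2 * (μ / ε) * |k|) * (1 + k ^ 2) ^ m₁), abs_inv, abs_of_pos hε, smul_eq_mul,
          mul_inv_cancel_left₀ hε.ne']
        rfl
    _ ≤ ε * ∫ κ, ε⁻¹ ^ 2 * (C ^ 2 * ε ^ (2 * θ)) *
          (‖FT A κ‖ ^ 2 * Real.exp (2 * μ * |κ|) * (1 + κ ^ 2) ^ m₂) := by
        refine mul_le_mul_of_nonneg_left ?_ hε.le
        exact integral_mono_of_nonneg (ae_of_all _ fun κ => by positivity)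
          (hA.integrable_weighted.const_mul _) (ae_of_all _ hpt)
    _ = C ^ 2 * ε ^ (2 * θ - 1) * weightedNormSq μ m₂ (FT A) := by
        rw [integral_const_mul, weightedNormSq, rpow_sub hε, rpow_one]
        field_simp

theorem stmt_14_general (θ₀ θinf C : ℝ) (hθ₀ : 0 ≤ θ₀) (hC : 0 < C)
    (g : ℝ → ℂ)
    (hg : ∀ k : ℝ, ‖g k‖ ≤ C * min (|k| ^ θ₀) ((1 + |k|) ^ θinf))
    (μ₁ μ₂ m₁ m₂ : ℝ) (hμ : μ₁ = μ₂) (hm₁ : 0 ≤ m₁)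
    (hm : m₂ - m₁ ≥ max θ₀ θinf) :
    ∃ C' > 0, ∀ ε : ℝ, 0 < ε → ε < 1 → ∀ A : ℝ → ℂ, memH μ₂ m₂ A →
      Hnorm (μ₁ / ε) m₁ (multOp g (fun x => A (ε * x))) ≤
        C' * ε ^ (θ₀ - 1 / 2) * Hnorm μ₂ m₂ A := by
  subst hμ
  have hsymb : ∀ k, ‖g k‖ ≤ C * |k| ^ θ₀ := fun k =>
    (hg k).trans (mul_le_mul_of_nonneg_left (min_le_left _ _) hC.le)
  refine ⟨C, hC, fun ε hε hε1 A hA => ?_⟩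
  calc Hnorm (μ₁ / ε) m₁ (multOp g fun x => A (ε * x))
      ≤ weightedNormSq (μ₁ / ε) m₁ (fun k => g k * FT (fun x => A (ε * x)) k) ^ ((1 : ℝ) / 2) :=
        Hnorm_multOp_le _ _ _ _
    _ ≤ (C ^ 2 * ε ^ (2 * θ₀ - 1) * weightedNormSq μ₁ m₂ (FT A)) ^ ((1 : ℝ) / 2) := by
        gcongr
        · exact weightedNormSq_nonneg _ _ _
        exact weightedNormSq_multiplier_comp_mul_le hC.le hθ₀ hm₁ ((le_max_left _ _).trans hm)
          hsymb hA hε hε1.le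
    _ = C * ε ^ (θ₀ - 1 / 2) * Hnorm μ₁ m₂ A := by
        have hW := weightedNormSq_nonneg μ₁ m₂ (FT A)
        rw [Hnorm_eq, mul_rpow (by positivity) hW, mul_rpow (by positivity) (by positivity),
          ← rpow_natCast, ← rpow_mul hC.le, ← rpow_mul hε.le,
          show ((2 : ℕ) : ℝ) * (1 / 2) = 1 by norm_num, rpow_one,
          show (2 * θ₀ - 1) * (1 / 2) = θ₀ - 1 / 2 by ring]

theorem stmt_14 (θ₀ θinf C : ℝ) (hθ₀ : 0 ≤ θ₀) (hC : 0 < C)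
    (g : ℝ → ℂ)
    (hg : ∀ k : ℝ, ‖g k‖ ≤ C * min (|k| ^ θ₀) ((1 + |k|) ^ θinf))
    (μ₁ μ₂ m₁ m₂ : ℝ) (hμ : μ₁ = μ₂) (hμ₂ : 0 ≤ μ₂) (hm₁ : 0 ≤ m₁) (hm₂ : 0 ≤ m₂)
    (hm : m₂ - m₁ ≥ max θ₀ θinf) :
    ∃ C' > 0, ∀ ε : ℝ, 0 < ε → ε < 1 → ∀ A : ℝ → ℂ, memH μ₂ m₂ A →
      Hnorm (μ₁ / ε) m₁ (multOp g (fun x => A (ε * x))) ≤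
        C' * ε ^ (θ₀ - 1 / 2) * Hnorm μ₂ m₂ A :=
  stmt_14_general θ₀ θinf C hθ₀ hC g hg μ₁ μ₂ m₁ m₂ hμ hm₁ hm
end

section
/- (Multiplier estimate in Wiener norm) Let θ₀ ≥ 0, θ_∞ ∈ ℝ, and g: ℝ → ℂ with |g(k)| ≤ C·min(|k|^{θ₀}, (1+|k|)^{θ_∞}), and let g_op = 𝓕^{-1} g 𝓕. If μ₁ = μ₂ ≥ 0 and m₂ − m₁ ≥ max(θ₀, θ_∞), then there is C' > 0 such that for all ε ∈ (0,1), ‖g_op(A(ε·))‖_{W_{μ₁/ε, m₁}} ≤ C' ε^{θ₀} ‖A‖_{W_{μ₂, m₂}}, for all A ∈ W_{μ₂,m₂}. -/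
open MeasureTheory

/-- Membership in the weighted Wiener-type space `W_{μ,m}`. -/
def memW (μ m : ℝ) (u : ℝ → ℂ) : Prop :=
  Integrable (fun k : ℝ => (1 + |k| ^ m) * Real.exp (μ * |k|) * ‖FT u k‖) volume

/-- The norm of the weighted Wiener-type space `W_{μ,m}`. -/
noncomputable def Wnorm (μ m : ℝ) (u : ℝ → ℂ) : ℝ :=
  ∫ k : ℝ, (1 + |k| ^ m) * Real.exp (μ * |k|) * ‖FT u k‖

/-!
On the Fourier side `multOp g` multiplies by `g`, so, up to a null set, `‖𝓕 (multOp g u)‖` is at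
most `‖g‖ ‖𝓕 u‖`: this is Fourier inversion for an integrable function with integrable transform,
and in every other case the transform is the junk value `0`. For `u = A (ε ·)` one has
`‖𝓕 u k‖ = ε⁻¹ ‖𝓕 A (k / ε)‖`, and the substitution `k = ε x` turns the weight `exp ((μ / ε) |k|)`
into `exp (μ |x|)`, so the `W_{μ/ε, m₁}`-norm is controlled by the `W_{μ, m₂}`-norm as soon as
`(1 + |k| ^ m₁) ‖g k‖ ≤ K (1 + |k / ε| ^ m₂)`. With `‖g k‖ ≤ C |k| ^ θ₀` and `m₁ + θ₀ ≤ m₂`, this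
holds with `K = 2 C ε ^ θ₀`, since `|εx| ^ a ≤ 1 + |x| ^ m₂` for `0 ≤ a ≤ m₂` and `ε ≤ 1`.
-/

open FourierTransform
open scoped RealInnerProductSpace

namespace Real

variable {V : Type*} [NormedAddCommGroup V] [InnerProductSpace ℝ V] [FiniteDimensional ℝ V]
  [MeasurableSpace V] [BorelSpace V]

theorem integral_fourier_mul_eq {f g : V → ℂ} (hf : Integrable f) (hg : Integrable g) :
    ∫ ξ, 𝓕 f ξ * g ξ = ∫ x, f x * 𝓕 g x := by
  have := VectorFourier.integral_fourierIntegral_smul_eq_flip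
    (L := innerₗ V) continuous_fourierChar continuous_inner hf hg
  simp only [flip_innerₗ, smul_eq_mul] at this
  exact this

theorem integral_fourierInv_mul_eq {f g : V → ℂ} (hf : Integrable f) (hg : Integrable g) :
    ∫ ξ, 𝓕⁻ f ξ * g ξ = ∫ x, f x * 𝓕⁻ g x := by
  calc ∫ ξ, 𝓕⁻ f ξ * g ξ = ∫ ξ, 𝓕 f ξ * g (-ξ) := by
        rw [← integral_neg_eq_self]; simp [fourierInv_eq_fourier_neg]
    _ = ∫ x, f x * 𝓕 (fun y => g (-y)) x := integral_fourier_mul_eq hf hg.comp_neg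
    _ = ∫ x, f x * 𝓕⁻ g x := by rw [fourierInv_eq_fourier_comp_neg]

theorem continuous_fourierInv_of_integrable {f : V → ℂ} (hf : Integrable f) :
    Continuous (𝓕⁻ f) := by
  rw [fourierInv_eq_fourier_comp_neg]
  exact VectorFourier.fourierIntegral_continuous continuous_fourierChar continuous_inner
    hf.comp_neg

theorem fourierInv_fourier_ae_eq {f : V → ℂ} (hf : Integrable f) (hf' : Integrable (𝓕 f)) :
    𝓕⁻ (𝓕 f) =ᵐ[volume] f := by
  refine ae_eq_of_integral_contDiff_smul_eq
    (continuous_fourierInv_of_integrable hf').locallyIntegrable hf.locallyIntegrable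
    fun φ hφ hφc => ?_
  let ψ : SchwartzMap V ℂ :=
    (hφc.comp_left (g := ((↑) : ℝ → ℂ)) Complex.ofReal_zero).toSchwartzMap
      (Complex.ofRealCLM.contDiff.comp hφ)
  have hψ (z : ℂ) (x : V) : φ x • z = ψ x * z := Complex.real_smul
  simp only [hψ]
  calc ∫ x, ψ x * 𝓕⁻ (𝓕 f) x = ∫ x, 𝓕⁻ (𝓕 f) x * ψ x := by simp_rw [mul_comm]
    _ = ∫ ξ, 𝓕 f ξ * 𝓕⁻ (ψ : V → ℂ) ξ := integral_fourierInv_mul_eq hf' ψ.integrable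
    _ = ∫ x, f x * 𝓕 (𝓕⁻ (ψ : V → ℂ)) x := by
        rw [← SchwartzMap.fourierInv_coe]
        exact integral_fourier_mul_eq hf (𝓕⁻ ψ).integrable
    _ = ∫ x, ψ x * f x := by
        rw [← SchwartzMap.fourierInv_coe, ← SchwartzMap.fourier_coe, fourier_fourierInv_eq]
        simp_rw [mul_comm]

theorem fourier_of_not_integrable {f : V → ℂ} (hf : ¬ Integrable f) : 𝓕 f = 0 := by
  funext w
  rw [fourier_eq]
  exact integral_undef ((fourierIntegral_convergent_iff w).not.mpr hf)

theorem fourierInv_of_not_integrable {f : V → ℂ} (hf : ¬ Integrable f) : 𝓕⁻ f = 0 := by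
  rw [fourierInv_eq_fourier_comp_neg]
  exact fourier_of_not_integrable fun h => hf (by simpa using h.comp_neg)

theorem ae_norm_fourier_fourierInv_le (f : V → ℂ) : ∀ᵐ ξ, ‖𝓕 (𝓕⁻ f) ξ‖ ≤ ‖f ξ‖ := by
  by_cases hf : Integrable f
  · rw [fourierInv_comm]
    by_cases hf' : Integrable (𝓕 f)
    · filter_upwards [fourierInv_fourier_ae_eq hf hf'] with ξ hξ
      rw [hξ]
    · simp [fourierInv_of_not_integrable hf']
  · simp [fourierInv_of_not_integrable hf, fourier_eq]

theorem fourier_comp_smul {E : Type*} [NormedAddCommGroup E] [NormedSpace ℂ E] (f : V → E)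
    {c : ℝ} (hc : c ≠ 0) (w : V) :
    𝓕 (fun x => f (c • x)) w = |(c ^ Module.finrank ℝ V)⁻¹| • 𝓕 f (c⁻¹ • w) := by
  have hinner (v : V) : ⟪v, w⟫ = ⟪c • v, c⁻¹ • w⟫ := by
    rw [real_inner_smul_left, real_inner_smul_right, ← mul_assoc, mul_inv_cancel₀ hc, one_mul]
  simp_rw [fourier_eq, hinner]
  exact Measure.integral_comp_smul volume (fun y => 𝐞 (-⟪y, c⁻¹ • w⟫) • f y) c

theorem norm_fourier_comp_mul_left (f : ℝ → ℂ) {ε : ℝ} (hε : 0 < ε) (k : ℝ) :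
    ‖𝓕 (fun x => f (ε * x)) k‖ = ε⁻¹ * ‖𝓕 f (ε⁻¹ * k)‖ := by
  have := fourier_comp_smul f hε.ne' k
  simp only [smul_eq_mul, Module.finrank_self, pow_one] at this
  rw [this, norm_smul, Real.norm_eq_abs, abs_abs, abs_inv, abs_of_pos hε]

end Real

theorem Real.rpow_le_one_add_rpow {t a b : ℝ} (ht : 0 ≤ t) (ha : 0 ≤ a) (hab : a ≤ b) :
    t ^ a ≤ 1 + t ^ b := by
  rcases le_or_gt t 1 with ht1 | ht1
  · linarith [Real.rpow_le_one ht ht1 ha, Real.rpow_nonneg ht b]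
  · linarith [Real.rpow_le_rpow_of_exponent_le ht1.le hab]

theorem one_add_abs_rpow_mul_abs_rpow_le {ε θ m₁ m₂ : ℝ} (hε : 0 < ε) (hε1 : ε ≤ 1) (hθ : 0 ≤ θ)
    (hm₁ : 0 ≤ m₁) (hm : m₁ + θ ≤ m₂) (k : ℝ) :
    (1 + |k| ^ m₁) * |k| ^ θ ≤ 2 * ε ^ θ * (1 + |ε⁻¹ * k| ^ m₂) := by
  have hk : |k| = ε * |ε⁻¹ * k| := by
    rw [abs_mul, abs_inv, abs_of_pos hε, mul_inv_cancel_left₀ hε.ne']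
  set t := |ε⁻¹ * k|
  have ht : 0 ≤ t := abs_nonneg _
  have hkt : |k| ≤ t := hk ▸ mul_le_of_le_one_left ht hε1
  calc (1 + |k| ^ m₁) * |k| ^ θ ≤ (1 + t ^ m₁) * (ε ^ θ * t ^ θ) := by
        rw [← Real.mul_rpow hε.le ht, ← hk]
        gcongr
    _ = ε ^ θ * (t ^ θ + t ^ (m₁ + θ)) := by
        rw [Real.rpow_add_of_nonneg ht hm₁ hθ]; ring
    _ ≤ ε ^ θ * ((1 + t ^ m₂) + (1 + t ^ m₂)) := by
        gcongr
        · exact Real.rpow_le_one_add_rpow ht hθ (by linarith)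
        · exact Real.rpow_le_one_add_rpow ht (by linarith) hm
    _ = 2 * ε ^ θ * (1 + t ^ m₂) := by ring

theorem Wnorm_multOp_le {μ m : ℝ} {g u : ℝ → ℂ} {F : ℝ → ℝ} (hF : Integrable F)
    (hle : ∀ k, (1 + |k| ^ m) * Real.exp (μ * |k|) * (‖g k‖ * ‖FT u k‖) ≤ F k) :
    Wnorm μ m (multOp g u) ≤ ∫ k, F k := by
  refine integral_mono_of_nonneg (Filter.Eventually.of_forall fun k => by positivity) hF ?_
  filter_upwards [Real.ae_norm_fourier_fourierInv_le (fun k => g k * FT u k)] with k hk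
  refine le_trans ?_ (hle k)
  rw [← norm_mul]
  gcongr
  exact hk

theorem Wnorm_multOp_comp_mul_left_le {μ m₁ m₂ ε K : ℝ} {g A : ℝ → ℂ} (hε : 0 < ε)
    (hA : memW μ m₂ A) (hg : ∀ k, (1 + |k| ^ m₁) * ‖g k‖ ≤ K * (1 + |ε⁻¹ * k| ^ m₂)) :
    Wnorm (μ / ε) m₁ (multOp g fun x => A (ε * x)) ≤ K * Wnorm μ m₂ A := by
  set W : ℝ → ℝ := fun x => (1 + |x| ^ m₂) * Real.exp (μ * |x|) * ‖FT A x‖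
  have hW : Integrable (fun k => K * (ε⁻¹ * W (ε⁻¹ * k))) :=
    ((hA.comp_mul_left' (inv_ne_zero hε.ne')).const_mul _).const_mul _
  calc Wnorm (μ / ε) m₁ (multOp g fun x => A (ε * x))
      ≤ ∫ k, K * (ε⁻¹ * W (ε⁻¹ * k)) := Wnorm_multOp_le hW fun k => ?_
    _ = K * Wnorm μ m₂ A := by
        rw [integral_const_mul, integral_const_mul, Measure.integral_comp_inv_mul_left,
          abs_of_pos hε, smul_eq_mul, inv_mul_cancel_left₀ hε.ne']
        rfl
  have hexp : μ / ε * |k| = μ * |ε⁻¹ * k| := by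
    rw [abs_mul, abs_inv, abs_of_pos hε]; ring
  rw [FT, Real.norm_fourier_comp_mul_left A hε, ← FT, hexp]
  set R := ε⁻¹ * Real.exp (μ * |ε⁻¹ * k|) * ‖FT A (ε⁻¹ * k)‖
  calc (1 + |k| ^ m₁) * Real.exp (μ * |ε⁻¹ * k|) * (‖g k‖ * (ε⁻¹ * ‖FT A (ε⁻¹ * k)‖))
      = (1 + |k| ^ m₁) * ‖g k‖ * R := by ring
    _ ≤ K * (1 + |ε⁻¹ * k| ^ m₂) * R := by gcongr ?_ * R; exact hg k
    _ = K * (ε⁻¹ * W (ε⁻¹ * k)) := by ring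

theorem stmt_15_general (θ₀ θinf C : ℝ) (hθ₀ : 0 ≤ θ₀) (hC : 0 < C)
    (g : ℝ → ℂ)
    (hg : ∀ k : ℝ, ‖g k‖ ≤ C * min (|k| ^ θ₀) ((1 + |k|) ^ θinf))
    (μ₁ μ₂ m₁ m₂ : ℝ) (hμ : μ₁ = μ₂) (hm₁ : 0 ≤ m₁)
    (hm : m₂ - m₁ ≥ max θ₀ θinf) :
    ∃ C' > 0, ∀ ε : ℝ, 0 < ε → ε < 1 → ∀ A : ℝ → ℂ, memW μ₂ m₂ A →
      Wnorm (μ₁ / ε) m₁ (multOp g (fun x => A (ε * x))) ≤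
        C' * ε ^ θ₀ * Wnorm μ₂ m₂ A := by
  subst hμ
  have hmm : m₁ + θ₀ ≤ m₂ := by linarith [le_max_left θ₀ θinf]
  refine ⟨2 * C, by positivity, fun ε hε hε1 A hA =>
    Wnorm_multOp_comp_mul_left_le hε hA fun k => ?_⟩
  calc (1 + |k| ^ m₁) * ‖g k‖ ≤ (1 + |k| ^ m₁) * (C * |k| ^ θ₀) := by
        gcongr
        exact (hg k).trans (mul_le_mul_of_nonneg_left (min_le_left _ _) hC.le)
    _ = C * ((1 + |k| ^ m₁) * |k| ^ θ₀) := by ring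
    _ ≤ C * (2 * ε ^ θ₀ * (1 + |ε⁻¹ * k| ^ m₂)) := by
        gcongr C * ?_
        exact one_add_abs_rpow_mul_abs_rpow_le hε hε1.le hθ₀ hm₁ hmm k
    _ = 2 * C * ε ^ θ₀ * (1 + |ε⁻¹ * k| ^ m₂) := by ring

theorem stmt_15 (θ₀ θinf C : ℝ) (hθ₀ : 0 ≤ θ₀) (hC : 0 < C)
    (g : ℝ → ℂ)
    (hg : ∀ k : ℝ, ‖g k‖ ≤ C * min (|k| ^ θ₀) ((1 + |k|) ^ θinf))
    (μ₁ μ₂ m₁ m₂ : ℝ) (hμ : μ₁ = μ₂) (hμ₂ : 0 ≤ μ₂) (hm₁ : 0 ≤ m₁) (hm₂ : 0 ≤ m₂)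
    (hm : m₂ - m₁ ≥ max θ₀ θinf) :
    ∃ C' > 0, ∀ ε : ℝ, 0 < ε → ε < 1 → ∀ A : ℝ → ℂ, memW μ₂ m₂ A →
      Wnorm (μ₁ / ε) m₁ (multOp g (fun x => A (ε * x))) ≤
        C' * ε ^ θ₀ * Wnorm μ₂ m₂ A :=
  stmt_15_general θ₀ θinf C hθ₀ hC g hg μ₁ μ₂ m₁ m₂ hμ hm₁ hm
end
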